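/- arXiv:1802.04629 — 3 statements merged into one kernel-verified Lean document; each statement's English description precedes it below -/
import Mathlib

section
/- Let k_H > k_L > 0, θ ∈ (0,1), k = θ·k_H + (1−θ)·k_L, and γ ≥ 0. If k_L ≥ ((1 + exp(2γ))/(3 + exp(−2γ)))·k, then (1 + exp(2γ))/(3 + exp(−2γ)) < 1, which is equivalent to γ < (1/2)·ln(1 + √2). -/
theorem quantum_validity_condition (kH kL θ k γ : ℝ)
    (hHL : kH > kL) (hL : kL > 0) (hθ : θ ∈ Set.Ioo (0:ℝ) 1)
    (hk : k = θ * kH + (1 - θ) * kL) (hγ : γ ≥ 0)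
    (hineq : kL ≥ ((1 + Real.exp (2 * γ)) / (3 + Real.exp (-(2 * γ)))) * k) :
    (1 + Real.exp (2 * γ)) / (3 + Real.exp (-(2 * γ))) < 1 ∧
      ((1 + Real.exp (2 * γ)) / (3 + Real.exp (-(2 * γ))) < 1 ↔
        γ < (1 / 2) * Real.log (1 + Real.sqrt 2)) := by
  obtain ⟨hθ0, hθ1⟩ := hθ
  have hx : Real.exp (2 * γ) > 0 := Real.exp_pos _
  have hy : Real.exp (-(2 * γ)) > 0 := Real.exp_pos _
  have hden : (0:ℝ) < 3 + Real.exp (-(2 * γ)) := by linarith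
  have hkL : k > kL := by nlinarith
  have hfrac : (1 + Real.exp (2 * γ)) / (3 + Real.exp (-(2 * γ))) < 1 := by
    rw [div_lt_one hden]
    by_contra h
    push_neg at h
    have hf1 : (1:ℝ) ≤ (1 + Real.exp (2 * γ)) / (3 + Real.exp (-(2 * γ))) :=
      (one_le_div hden).mpr h
    have : k ≤ kL := le_trans (le_mul_of_one_le_left (le_of_lt (by linarith)) hf1) hineq
    linarith
  have hs2 : (0:ℝ) < 1 + Real.sqrt 2 := by positivity
  refine ⟨hfrac, ?_⟩
  rw [div_lt_one hden]
  have hxy : Real.exp (-(2 * γ)) = 1 / Real.exp (2 * γ) := by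
    rw [Real.exp_neg]; ring
  constructor
  · intro h
    have hlt : Real.exp (2 * γ) < 1 + Real.sqrt 2 := by
      rw [hxy] at h
      have h2 : Real.sqrt 2 ^ 2 = 2 := Real.sq_sqrt (by norm_num)
      nlinarith [Real.sqrt_nonneg 2, mul_lt_mul_of_pos_right h hx,
        one_div_mul_cancel (ne_of_gt hx)]
    have := Real.lt_log_iff_exp_lt hs2 |>.mpr hlt
    linarith
  · intro h
    have hlt : Real.exp (2 * γ) < 1 + Real.sqrt 2 := by
      have : 2 * γ < Real.log (1 + Real.sqrt 2) := by linarith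
      calc Real.exp (2 * γ) < Real.exp (Real.log (1 + Real.sqrt 2)) := Real.exp_lt_exp.mpr this
        _ = 1 + Real.sqrt 2 := Real.exp_log hs2
    rw [hxy]
    have h2 : Real.sqrt 2 ^ 2 = 2 := Real.sq_sqrt (by norm_num)
    have hx1 : Real.exp (2 * γ) ≥ 1 := Real.one_le_exp (by linarith)
    have hq : (1 + Real.sqrt 2 - Real.exp (2 * γ)) *
        (Real.exp (2 * γ) - 1 + Real.sqrt 2) > 0 := by
      apply mul_pos <;> nlinarith [Real.sqrt_nonneg 2]
    nlinarith [one_div_mul_cancel (ne_of_gt hx), mul_pos hx hx]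
end

section
/- Let k_H > k_L > 0, θ ∈ (0,1), k = θk_H + (1−θ)k_L. Then (1/8)·(k² − (k − k_H)²·θ) > (k² − (2k² − 2k·k_H + k_H²)·θ)/(8(1 − θ)). -/
theorem payoff_comparison_low_regime (kH kL θ k : ℝ)
    (hHL : kH > kL) (hL : kL > 0) (hθ : θ ∈ Set.Ioo (0:ℝ) 1)
    (hk : k = θ * kH + (1 - θ) * kL) :
    (1 / 8) * (k ^ 2 - (k - kH) ^ 2 * θ) >
      (k ^ 2 - (2 * k ^ 2 - 2 * k * kH + kH ^ 2) * θ) / (8 * (1 - θ)) := by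
  obtain ⟨h0, h1⟩ := hθ
  rw [gt_iff_lt, div_lt_iff₀ (by nlinarith : (0:ℝ) < 8 * (1 - θ))]
  have key : 1 / 8 * (k ^ 2 - (k - kH) ^ 2 * θ) * (8 * (1 - θ)) -
      (k ^ 2 - (2 * k ^ 2 - 2 * k * kH + kH ^ 2) * θ) = (θ * (k - kH)) ^ 2 := by ring
  have h3 : 0 < kH - k := by rw [hk]; nlinarith
  have hpos : (0:ℝ) < (θ * (k - kH)) ^ 2 := by
    have h4 : (θ * (k - kH)) ^ 2 = (θ * (kH - k)) ^ 2 := by ring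
    rw [h4]; positivity
  linarith
end

section
/- Let k_H > k_L > 0, θ ∈ (0,1), k = θk_H + (1−θ)k_L. Then u_B − u_A = (1/8)(k² + (k − k_H)²θ) − (1/8)(k² − (k − k_H)²θ) = (1/4)(k_H − k_L)²(1 − θ)²θ, and this quantity is strictly positive. -/
theorem second_mover_advantage (kH kL θ k : ℝ)
    (hHL : kH > kL) (hL : kL > 0) (hθ : θ ∈ Set.Ioo (0:ℝ) 1)
    (hk : k = θ * kH + (1 - θ) * kL) :
    (1 / 8) * (k ^ 2 + (k - kH) ^ 2 * θ) - (1 / 8) * (k ^ 2 - (k - kH) ^ 2 * θ) =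
        (1 / 4) * (kH - kL) ^ 2 * (1 - θ) ^ 2 * θ ∧
      0 < (1 / 4) * (kH - kL) ^ 2 * (1 - θ) ^ 2 * θ := by
  obtain ⟨h0, h1⟩ := hθ
  constructor
  · subst hk; ring
  · have h2 : kH - kL ≠ 0 := by linarith
    have h3 : (1:ℝ) - θ ≠ 0 := by linarith
    positivity
end
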